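/- arXiv:2111.14649 — 6 statements merged into one kernel-verified Lean document; each statement's English description precedes it below -/
import Mathlib

section
/- Let (a_1,…,a_k) be an r-independent sequence of nonzero elements of ℤ/nℤ. Then the set D(a_1,…,a_k) of all j ∈ ℤ/nℤ such that the extended sequence (a_1,…,a_k,j) is r-dependent has cardinality at most q^{k+1}. -/
/-- A sequence `a` of elements of `ℤ/nℤ` is `r`-dependent if
`a₁ + ⋯ + a_k = r^{α₁}a₁ + ⋯ + r^{α_k}a_k` for some exponents `α_i ∈ {0,…,q-1}`
not all zero. -/
def rDep (n q r : ℕ) {k : ℕ} (a : Fin k → ZMod n) : Prop :=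
  ∃ α : Fin k → ℕ, (∀ i, α i < q) ∧ α ≠ 0 ∧
    ∑ i, a i = ∑ i, (r : ZMod n) ^ (α i) * a i

lemma unit_aux (n q r : ℕ) (hn : 0 < n) (hr : 1 ≤ r)
    (hprim : ∀ d : ℕ, d ∣ n → 1 < d → orderOf ((r : ZMod d)) = q)
    (β : ℕ) (hb0 : 0 < β) (hbq : β < q) :
    IsUnit ((1 : ZMod n) - (r : ZMod n) ^ β) := by
  have hm1 : 1 ≤ r ^ β := Nat.one_le_pow _ _ hr
  have hcast : ((r ^ β - 1 : ℕ) : ZMod n) = (r : ZMod n) ^ β - 1 := by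
    push_cast [Nat.cast_sub hm1]
    ring
  have : (1 : ZMod n) - (r : ZMod n) ^ β = -((r ^ β - 1 : ℕ) : ZMod n) := by
    rw [hcast]; ring
  rw [this, IsUnit.neg_iff]
  haveI : NeZero n := ⟨hn.ne'⟩
  rw [ZMod.isUnit_iff_coprime]
  by_contra h
  obtain ⟨p, pp, hpg⟩ := Nat.exists_prime_and_dvd h
  have hp1 : p ∣ r ^ β - 1 := hpg.trans (Nat.gcd_dvd_left _ _)
  have hpn : p ∣ n := hpg.trans (Nat.gcd_dvd_right _ _)
  have hord := hprim p hpn pp.one_lt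
  have h1 : ((r : ZMod p)) ^ β = 1 := by
    have : ((r ^ β - 1 : ℕ) : ZMod p) = 0 := (ZMod.natCast_eq_zero_iff _ _).2 hp1
    have h2 : ((r ^ β : ℕ) : ZMod p) = 1 := by
      have h3 : r ^ β = (r ^ β - 1) + 1 := (Nat.sub_add_cancel hm1).symm
      rw [h3, Nat.cast_add, this, Nat.cast_one, zero_add]
    push_cast at h2
    exact h2
  have hdvd : q ∣ β := hord ▸ orderOf_dvd_of_pow_eq_one h1
  exact absurd (Nat.le_of_dvd hb0 hdvd) (not_le.2 hbq)

/-- If `(a₁,…,a_k)` is an `r`-independent sequence of nonzero elements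
of `ℤ/nℤ`, then the set `D(a₁,…,a_k)` of all `j ∈ ℤ/nℤ` such that `(a₁,…,a_k,j)` is
`r`-dependent has cardinality at most `q^{k+1}`. -/
theorem stmt2 (n q r : ℕ) (hn : 0 < n) (hr : 1 ≤ r ∧ r ≤ n - 1)
    (hprim : ∀ d : ℕ, d ∣ n → 1 < d → orderOf ((r : ZMod d)) = q)
    (k : ℕ) (a : Fin k → ZMod n) (ha : ∀ i, a i ≠ 0)
    (hind : ¬ rDep n q r a) :
    {j : ZMod n | rDep n q r (Fin.snoc a j)}.ncard ≤ q ^ (k + 1) := by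
  classical
  set f : (Fin (k + 1) → Fin q) → ZMod n := fun α =>
    Ring.inverse ((1 : ZMod n) - (r : ZMod n) ^ (α (Fin.last k) : ℕ)) *
      ∑ i : Fin k, ((r : ZMod n) ^ (α i.castSucc : ℕ) - 1) * a i with hf
  have hsub : {j : ZMod n | rDep n q r (Fin.snoc a j)} ⊆ Set.range f := by
    rintro j ⟨α, hlt, hne, heq⟩
    rw [Fin.sum_univ_castSucc, Fin.sum_univ_castSucc] at heq
    simp only [Fin.snoc_castSucc, Fin.snoc_last] at heq
    set β := α (Fin.last k) with hβ
    by_cases hb0 : β = 0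
    · exfalso
      apply hind
      refine ⟨α ∘ Fin.castSucc, fun i => hlt _, ?_, ?_⟩
      · intro h0
        apply hne
        funext i
        refine Fin.lastCases ?_ ?_ i
        · simpa using hb0
        · intro i; exact congrFun h0 i
      · have : (r : ZMod n) ^ β = 1 := by rw [hb0, pow_zero]
        rw [this, one_mul] at heq
        exact add_right_cancel heq
    · have hu : IsUnit ((1 : ZMod n) - (r : ZMod n) ^ β) :=
        unit_aux n q r hn hr.1 hprim β (Nat.pos_of_ne_zero hb0) (hlt _)
      refine ⟨fun i => ⟨α i, hlt i⟩, ?_⟩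
      have key : ((1 : ZMod n) - (r : ZMod n) ^ β) * j =
          ∑ i : Fin k, ((r : ZMod n) ^ (α i.castSucc) - 1) * a i := by
        rw [Finset.sum_congr rfl (fun i _ => sub_one_mul _ (a i)), Finset.sum_sub_distrib]
        linear_combination heq
      simp only [hf]
      rw [← hβ, ← key, Ring.inverse_mul_cancel_left _ _ hu]
  calc {j : ZMod n | rDep n q r (Fin.snoc a j)}.ncard
      ≤ (Set.range f).ncard := Set.ncard_le_ncard hsub (Set.finite_range f)
    _ = (f '' Set.univ).ncard := by rw [Set.image_univ]
    _ ≤ (Set.univ : Set (Fin (k + 1) → Fin q)).ncard := Set.ncard_image_le Set.finite_univ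
    _ = q ^ (k + 1) := by simp [Set.ncard_univ]
end

section
/- Suppose a sequence (a_1,…,a_k) of nonzero elements of ℤ/nℤ contains at least q^m + m distinct values. Then one can choose an r-independent subsequence of length m that starts with a_1 (i.e., of the form (a_1, a_{i_2},…,a_{i_m}) with 1 < i_2 < ⋯ < i_m ≤ k). -/
lemma keyLem (n q r : ℕ) [NeZero n]
    (hprim : ∀ d : ℕ, d ∣ n → 1 < d → orderOf ((r : ZMod d)) = q)
    (hr1 : 1 ≤ r)
    (b : ZMod n) (α : ℕ) (hα0 : 0 < α) (hαq : α < q)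
    (h : (r : ZMod n) ^ α * b = b) : b = 0 := by
  by_contra hb
  have hdn : addOrderOf b ∣ n := by
    simpa [ZMod.card] using addOrderOf_dvd_card (x := b)
  have hd1 : 1 < addOrderOf b := by
    have h1 : addOrderOf b ≠ 1 := fun h1 => hb (AddMonoid.addOrderOf_eq_one_iff.mp h1)
    have h0 : 0 < addOrderOf b := addOrderOf_pos b
    omega
  have hrα : 1 ≤ r ^ α := Nat.one_le_pow _ _ (by omega)
  have hsm : (r ^ α) • b = b := by
    rw [nsmul_eq_mul]; push_cast; exact h
  have hz : (r ^ α - 1) • b = 0 := by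
    have : (r ^ α - 1 + 1) • b = b := by rw [Nat.sub_add_cancel hrα]; exact hsm
    rw [add_nsmul, one_nsmul] at this
    exact add_eq_right.mp this
  have hdvd : addOrderOf b ∣ r ^ α - 1 := addOrderOf_dvd_iff_nsmul_eq_zero.mpr hz
  set d := addOrderOf b with hd
  have h1 : ((r : ZMod d)) ^ α = 1 := by
    have hzero : ((r ^ α - 1 : ℕ) : ZMod d) = 0 := (ZMod.natCast_eq_zero_iff _ _).mpr hdvd
    have : ((r ^ α : ℕ) : ZMod d) = ((r ^ α - 1 + 1 : ℕ) : ZMod d) := by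
      rw [Nat.sub_add_cancel hrα]
    push_cast at this
    rw [this]
    push_cast at hzero
    rw [hzero]; ring
  have hq : q ∣ α := by
    rw [← hprim d hdn hd1]
    exact orderOf_dvd_of_pow_eq_one h1
  have := Nat.le_of_dvd hα0 hq
  omega

lemma rDep_comp_equiv {n q r m : ℕ} (c : Fin m → ZMod n) (σ : Equiv.Perm (Fin m))
    (h : rDep n q r (c ∘ σ)) : rDep n q r c := by
  obtain ⟨α, hα, hα0, hsum⟩ := h
  refine ⟨α ∘ σ.symm, fun i => hα _, ?_, ?_⟩
  · intro h0
    apply hα0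
    funext i
    have := congrFun h0 (σ i)
    simpa using this
  · calc ∑ i, c i = ∑ i, (c ∘ σ) i := (Equiv.sum_comp σ c).symm
      _ = ∑ i, (r : ZMod n) ^ (α i) * (c ∘ σ) i := hsum
      _ = ∑ i, (r : ZMod n) ^ ((α ∘ σ.symm) (σ i)) * c (σ i) := by simp [Function.comp]
      _ = ∑ i, (r : ZMod n) ^ ((α ∘ σ.symm) i) * c i :=
        Equiv.sum_comp σ (fun i => (r : ZMod n) ^ ((α ∘ σ.symm) i) * c i)

lemma exists_indep_tuple {n q r m : ℕ} [NeZero n] (hq : 2 ≤ q) (hm : 0 < m)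
    (hkey : ∀ b : ZMod n, ∀ α : ℕ, 0 < α → α < q → (r : ZMod n) ^ α * b = b → b = 0)
    (S : Finset (ZMod n)) (v : ZMod n) (hv : v ∈ S) (hv0 : v ≠ 0)
    (hS : q ^ m + m ≤ S.card) :
    ∃ b : Fin m → ZMod n, Function.Injective b ∧ (∀ i, b i ∈ S) ∧
      b ⟨0, hm⟩ = v ∧ ¬ rDep n q r b := by
  have hinj : ∀ β : ℕ, 0 < β → β < q →
      Function.Injective (fun x : ZMod n => ((r : ZMod n) ^ β - 1) * x) := by
    intro β hβ0 hβq x y hxy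
    have h1 : (r : ZMod n) ^ β * (x - y) = (x - y) := by
      simp only at hxy
      linear_combination hxy
    have := hkey (x - y) β hβ0 hβq h1
    linear_combination this
  suffices h : ∀ j, 1 ≤ j → j ≤ m → ∃ b : Fin j → ZMod n, Function.Injective b ∧
      (∀ i, b i ∈ S) ∧ (∀ hj : 0 < j, b ⟨0, hj⟩ = v) ∧ ¬ rDep n q r b by
    obtain ⟨b, h1, h2, h3, h4⟩ := h m hm le_rfl
    exact ⟨b, h1, h2, h3 hm, h4⟩
  intro j
  induction j with
  | zero => omega
  | succ j ih =>
    intro _ hjm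
    rcases Nat.eq_zero_or_pos j with rfl | hj
    · -- base case j+1 = 1
      refine ⟨fun _ => v, fun i1 i2 _ => Fin.ext (by omega), fun _ => hv, fun _ => rfl, ?_⟩
      rintro ⟨α, hαq, hα0, hsum⟩
      simp only [Fin.sum_univ_succ, Fin.sum_univ_zero, add_zero] at hsum
      have hpos : 0 < α 0 := by
        rcases Nat.eq_zero_or_pos (α 0) with h0 | h0
        · exfalso; apply hα0; funext i
          have : i = (0 : Fin (0+1)) := Fin.ext (by omega)
          rw [this]; exact h0
        · exact h0
      exact hv0 (hkey v (α 0) hpos (hαq 0) hsum.symm)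
    · obtain ⟨b, hbinj, hbS, hb0, hbdep⟩ := ih hj (by omega)
      classical
      set Bad : Finset (ZMod n) :=
        (Finset.univ ×ˢ Finset.Ico 1 q).biUnion
          (fun p : (Fin j → Fin q) × ℕ =>
            Finset.univ.filter (fun x => ((r : ZMod n) ^ p.2 - 1) * x
              = ∑ i, (b i - (r : ZMod n) ^ (p.1 i : ℕ) * b i))) with hBadDef
      have hBadCard : Bad.card ≤ q ^ j * (q - 1) := by
        refine le_trans (Finset.card_biUnion_le) ?_
        have hone : ∀ p ∈ (Finset.univ ×ˢ Finset.Ico 1 q : Finset ((Fin j → Fin q) × ℕ)),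
            (Finset.univ.filter (fun x => ((r : ZMod n) ^ p.2 - 1) * x
              = ∑ i, (b i - (r : ZMod n) ^ (p.1 i : ℕ) * b i))).card ≤ 1 := by
          intro p hp
          rw [Finset.mem_product, Finset.mem_Ico] at hp
          refine Finset.card_le_one.mpr (fun x hx y hy => ?_)
          rw [Finset.mem_filter] at hx hy
          exact hinj p.2 hp.2.1 hp.2.2 (hx.2.trans hy.2.symm)
        refine le_trans (Finset.sum_le_sum hone) ?_
        simp [Finset.card_product, Fintype.card_fun, Nat.card_Ico]
      have hused : (Finset.univ.image b).card ≤ j := by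
        refine le_trans Finset.card_image_le ?_
        simp
      have harith : q ^ j * (q - 1) + j < q ^ m + m := by
        have h1 : q ^ (j + 1) ≤ q ^ m := Nat.pow_le_pow_right (by omega) hjm
        have h2 : 1 ≤ q ^ j := Nat.one_le_pow _ _ (by omega)
        have h3 : q ^ j * (q - 1) + q ^ j * 1 = q ^ j * q := by
          rw [← Nat.mul_add]; congr 1; omega
        have h4 : q ^ j * q = q ^ (j + 1) := (pow_succ q j).symm
        omega
      have hne : (S \ (Bad ∪ Finset.univ.image b)).Nonempty := by
        rw [← Finset.card_pos]
        have hsub := Finset.card_union_le Bad (Finset.univ.image b)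
        have h5 := Finset.card_sdiff_add_card_eq_card
          (Finset.inter_subset_left (s₁ := S) (s₂ := Bad ∪ Finset.univ.image b))
        have h6 : (S \ (Bad ∪ Finset.univ.image b)).card
            = (S \ (S ∩ (Bad ∪ Finset.univ.image b))).card := by
          rw [Finset.sdiff_inter_self_left]
        have h7 : (S ∩ (Bad ∪ Finset.univ.image b)).card ≤ (Bad ∪ Finset.univ.image b).card :=
          Finset.card_le_card (Finset.inter_subset_right)
        omega
      obtain ⟨x, hx⟩ := hne
      rw [Finset.mem_sdiff, Finset.mem_union] at hx
      obtain ⟨hxS, hxn⟩ := hx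
      push_neg at hxn
      obtain ⟨hxBad, hxused⟩ := hxn
      have hxrange : ∀ i, b i ≠ x := by
        intro i hi
        exact hxused (Finset.mem_image.mpr ⟨i, Finset.mem_univ i, hi⟩)
      refine ⟨Fin.snoc b x, ?_, ?_, ?_, ?_⟩
      · intro i1 i2 h12
        rcases Fin.eq_castSucc_or_eq_last i1 with ⟨i1', rfl⟩ | rfl <;>
          rcases Fin.eq_castSucc_or_eq_last i2 with ⟨i2', rfl⟩ | rfl <;>
            simp only [Fin.snoc_castSucc, Fin.snoc_last] at h12
        · rw [hbinj h12]
        · exact absurd h12 (hxrange i1')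
        · exact absurd h12.symm (hxrange i2')
        · rfl
      · intro i
        rcases Fin.eq_castSucc_or_eq_last i with ⟨i', rfl⟩ | rfl
        · rw [Fin.snoc_castSucc]; exact hbS i'
        · rw [Fin.snoc_last]; exact hxS
      · intro _
        have h0 : (⟨0, Nat.succ_pos j⟩ : Fin (j + 1)) = Fin.castSucc ⟨0, hj⟩ := rfl
        rw [h0, Fin.snoc_castSucc]
        exact hb0 hj
      · rintro ⟨α, hαq, hα0, hsum⟩
        rw [Fin.sum_univ_castSucc, Fin.sum_univ_castSucc] at hsum
        simp only [Fin.snoc_castSucc, Fin.snoc_last] at hsum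
        rcases Nat.eq_zero_or_pos (α (Fin.last j)) with hβ | hβ
        · apply hbdep
          refine ⟨α ∘ Fin.castSucc, fun i => hαq _, ?_, ?_⟩
          · intro h0
            apply hα0
            funext i
            rcases Fin.eq_castSucc_or_eq_last i with ⟨i', rfl⟩ | rfl
            · exact congrFun h0 i'
            · exact hβ
          · rw [hβ, pow_zero, one_mul] at hsum
            have := add_right_cancel hsum
            exact this
        · apply hxBad
          rw [hBadDef]
          rw [Finset.mem_biUnion]
          refine ⟨(fun i => ⟨α (Fin.castSucc i), hαq _⟩, α (Fin.last j)), ?_, ?_⟩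
          · rw [Finset.mem_product, Finset.mem_Ico]
            exact ⟨Finset.mem_univ _, hβ, hαq _⟩
          · rw [Finset.mem_filter]
            refine ⟨Finset.mem_univ _, ?_⟩
            rw [Finset.sum_sub_distrib]
            simp only
            linear_combination -hsum

/-- If a sequence `(a₁,…,a_k)` of nonzero elements of `ℤ/nℤ` contains
at least `q^m + m` distinct values, then one can choose an `r`-independent subsequence
of length `m` starting with `a₁`. -/
theorem stmt3 (n q r m : ℕ) (hn : 0 < n) (hm : 0 < m)
    (hr : 1 ≤ r ∧ r ≤ n - 1)
    (hprim : ∀ d : ℕ, d ∣ n → 1 < d → orderOf ((r : ZMod d)) = q)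
    (k : ℕ) (hk : 0 < k) (a : Fin k → ZMod n) (ha : ∀ i, a i ≠ 0)
    (hcard : q ^ m + m ≤ (Finset.univ.image a).card) :
    ∃ s : Fin m → Fin k, StrictMono s ∧ s ⟨0, hm⟩ = ⟨0, hk⟩ ∧
      ¬ rDep n q r (a ∘ s) := by
  classical
  haveI : NeZero n := ⟨by omega⟩
  have hmk : m ≤ k := by
    have h1 : (Finset.univ.image a).card ≤ k := by
      refine le_trans Finset.card_image_le ?_
      simp
    omega
  rcases le_or_gt q 1 with hq | hq
  · -- trivial case: no rDep possible
    refine ⟨Fin.castLE hmk, fun i1 i2 h12 => h12, Fin.ext rfl, ?_⟩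
    rintro ⟨α, hαq, hα0, -⟩
    apply hα0
    funext i
    have := hαq i
    simpa using by omega
  · -- main case
    have hn2 : 1 < n := by
      rcases Nat.lt_or_ge n 2 with h | h
      · have hn1 : n = 1 := by omega
        subst hn1
        exact absurd (Subsingleton.elim (a ⟨0, hk⟩) 0) (ha ⟨0, hk⟩)
      · omega
    have hkey : ∀ b : ZMod n, ∀ α : ℕ, 0 < α → α < q → (r : ZMod n) ^ α * b = b → b = 0 :=
      fun b α h1 h2 h3 => keyLem n q r hprim hr.1 b α h1 h2 h3
    obtain ⟨b, hbinj, hbS, hb0, hbdep⟩ := exists_indep_tuple hq hm hkey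
      (Finset.univ.image a) (a ⟨0, hk⟩)
      (Finset.mem_image.mpr ⟨⟨0, hk⟩, Finset.mem_univ _, rfl⟩) (ha _) hcard
    -- first-occurrence indices
    have hT : ∀ i : Fin m, (Finset.univ.filter (fun idx => a idx = b i)).Nonempty := by
      intro i
      obtain ⟨idx, -, hidx⟩ := Finset.mem_image.mp (hbS i)
      exact ⟨idx, Finset.mem_filter.mpr ⟨Finset.mem_univ _, hidx⟩⟩
    set g : Fin m → Fin k := fun i => (Finset.univ.filter (fun idx => a idx = b i)).min' (hT i)
      with hg
    have hag : ∀ i, a (g i) = b i := by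
      intro i
      have := Finset.min'_mem _ (hT i)
      exact (Finset.mem_filter.mp this).2
    have hginj : Function.Injective g := by
      intro i1 i2 h12
      apply hbinj
      rw [← hag i1, ← hag i2, h12]
    have hg0 : g ⟨0, hm⟩ = ⟨0, hk⟩ := by
      have hmem : (⟨0, hk⟩ : Fin k) ∈ Finset.univ.filter (fun idx => a idx = b ⟨0, hm⟩) :=
        Finset.mem_filter.mpr ⟨Finset.mem_univ _, hb0.symm⟩
      have h1 := Finset.min'_le _ _ hmem
      exact le_antisymm h1 (by exact Fin.mk_le_of_le_val (by omega))
    set σ := Tuple.sort g with hσ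
    have hmono : Monotone (g ∘ σ) := Tuple.monotone_sort g
    have hsm : StrictMono (g ∘ σ) :=
      hmono.strictMono_of_injective (hginj.comp σ.injective)
    refine ⟨g ∘ σ, hsm, ?_, ?_⟩
    · have h1 : (g ∘ σ) ⟨0, hm⟩ ≤ g ⟨0, hm⟩ := by
        have := hmono (a := ⟨0, hm⟩) (b := σ.symm ⟨0, hm⟩) (by
          exact Fin.mk_le_of_le_val (by omega))
        simpa using this
      rw [hg0] at h1
      exact le_antisymm h1 (Fin.mk_le_of_le_val (by omega))
    · intro hdep
      apply hbdep
      apply rDep_comp_equiv b σ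
      have : a ∘ (g ∘ σ) = b ∘ σ := by
        funext i
        exact hag (σ i)
      rwa [this] at hdep
end

section
/- In a Lie type algebra L, every product of elements of L (with arbitrary bracketing) of length s can be written as a linear combination of left-normalized simple products [a_1,a_2,…,a_s] of the same length in the same elements. -/
/-- Binary trees with leaves labelled by elements of `L`: arbitrary bracketings. -/
inductive BTree (L : Type*) where
  | leaf : L → BTree L
  | node : BTree L → BTree L → BTree L

/-- Evaluation of a bracketing in the algebra given by the bilinear product `b`. -/
def BTree.eval {K L : Type*} [Field K] [AddCommGroup L] [Module K L]
    (b : L →ₗ[K] L →ₗ[K] L) : BTree L → L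
  | .leaf x => x
  | .node t u => b (t.eval b) (u.eval b)

/-- The list of leaves (left to right) of a bracketing. -/
def BTree.leaves {L : Type*} : BTree L → List L
  | .leaf x => [x]
  | .node t u => t.leaves ++ u.leaves

/-- The left-normalized simple product `[a₁,a₂,…,a_s] = [...[[a₁,a₂],a₃],…,a_s]`. -/
def sProd {K L : Type*} [Field K] [AddCommGroup L] [Module K L]
    (b : L →ₗ[K] L →ₗ[K] L) : List L → L
  | [] => 0
  | x :: xs => xs.foldl (fun acc y => b acc y) x

section Aux

variable {K L : Type*} [Field K] [AddCommGroup L] [Module K L]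
    (b : L →ₗ[K] L →ₗ[K] L)

lemma sProd_concat {l : List L} (hl : l ≠ []) (c : L) :
    sProd b (l ++ [c]) = b (sProd b l) c := by
  cases l with
  | nil => exact absurd rfl hl
  | cons a l => simp [sProd, List.foldl_append]

lemma span_perm_mono {l₁ l₂ : List L} (h : l₁.Perm l₂) :
    Submodule.span K {y : L | ∃ p : List L, p.Perm l₁ ∧ y = sProd b p} ≤
    Submodule.span K {y : L | ∃ p : List L, p.Perm l₂ ∧ y = sProd b p} := by
  apply Submodule.span_mono
  rintro y ⟨p, hp, rfl⟩
  exact ⟨p, hp.trans h, rfl⟩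

lemma key_lemma
    (hLT : ∀ x y z : L, ∃ α β : K, α ≠ 0 ∧
      b (b x y) z = α • b x (b y z) + β • b (b x z) y) :
    ∀ n (m l : List L), m.length ≤ n → l ≠ [] →
      b (sProd b l) (sProd b m) ∈ Submodule.span K
        {y : L | ∃ p : List L, p.Perm (l ++ m) ∧ y = sProd b p} := by
  intro n
  induction n with
  | zero =>
    intro m l hm _
    have : m = [] := List.length_eq_zero_iff.mp (Nat.le_zero.mp hm)
    subst this
    simp only [sProd, map_zero]
    exact Submodule.zero_mem _
  | succ n ih =>
    intro m l hm hl
    rcases m.eq_nil_or_concat with rfl | ⟨m', c, rfl⟩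
    on_goal 2 => simp only [List.concat_eq_append] at hm ⊢
    · simp only [sProd, map_zero]
      exact Submodule.zero_mem _
    rcases eq_or_ne m' [] with rfl | hm'
    · -- m = [c]
      apply Submodule.subset_span
      refine ⟨l ++ [c], List.Perm.refl _, ?_⟩
      rw [sProd_concat b hl c]
      simp [sProd]
    · have hlen : m'.length ≤ n := by
        have := hm
        simp only [List.length_append, List.length_singleton] at this
        omega
      rw [sProd_concat b hm' c]
      obtain ⟨α, β, hα, heq⟩ := hLT (sProd b l) (sProd b m') c
      have key_eq : b (sProd b l) (b (sProd b m') c) =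
          α⁻¹ • (b (b (sProd b l) (sProd b m')) c
            - β • b (b (sProd b l) c) (sProd b m')) := by
        rw [heq, add_sub_cancel_right, smul_smul, inv_mul_cancel₀ hα, one_smul]
      rw [key_eq]
      have h1 : b (b (sProd b l) (sProd b m')) c ∈ Submodule.span K
          {y : L | ∃ p : List L, p.Perm (l ++ (m' ++ [c])) ∧ y = sProd b p} := by
        have hmem := ih m' l hlen hl
        have hmap := Submodule.mem_map_of_mem (f := b.flip c) hmem
        rw [Submodule.map_span] at hmap
        have hsub : (b.flip c) '' {y : L | ∃ p : List L, p.Perm (l ++ m') ∧ y = sProd b p} ⊆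
            ↑(Submodule.span K
              {y : L | ∃ p : List L, p.Perm (l ++ (m' ++ [c])) ∧ y = sProd b p}) := by
          rintro _ ⟨y, ⟨p, hp, rfl⟩, rfl⟩
          apply Submodule.subset_span
          have hpne : p ≠ [] := by
            intro h
            subst h
            have := hp.length_eq
            simp at this
            cases l with
            | nil => exact hl rfl
            | cons a l => simp at this; omega
          refine ⟨p ++ [c], ?_, ?_⟩
          · rw [← List.append_assoc]
            exact hp.append_right [c]
          · rw [sProd_concat b hpne c]
            rfl
        exact Submodule.span_le.mpr hsub hmap
      have h2 : b (b (sProd b l) c) (sProd b m') ∈ Submodule.span K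
          {y : L | ∃ p : List L, p.Perm (l ++ (m' ++ [c])) ∧ y = sProd b p} := by
        rw [← sProd_concat b hl c]
        have hmem := ih m' (l ++ [c]) hlen (by simp)
        refine span_perm_mono b ?_ hmem
        rw [List.append_assoc]
        exact (List.Perm.refl l).append List.perm_append_comm
      exact Submodule.smul_mem _ _ (Submodule.sub_mem _ h1 (Submodule.smul_mem _ _ h2))

lemma leaves_ne_nil (t : BTree L) : t.leaves ≠ [] := by
  induction t with
  | leaf x => simp [BTree.leaves]
  | node t u iht ihu => simp [BTree.leaves, iht]

end Aux

/-- In a Lie type algebra, every product of elements of `L` with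
arbitrary bracketing can be written as a linear combination of left-normalized simple
products of the same length in the same elements. -/
theorem stmt5 {K L : Type*} [Field K] [AddCommGroup L] [Module K L]
    (b : L →ₗ[K] L →ₗ[K] L)
    (hLT : ∀ x y z : L, ∃ α β : K, α ≠ 0 ∧
      b (b x y) z = α • b x (b y z) + β • b (b x z) y)
    (t : BTree L) :
    t.eval b ∈ Submodule.span K
      {y : L | ∃ l : List L, l.Perm t.leaves ∧ y = sProd b l} := by
  induction t with
  | leaf x =>
    exact Submodule.subset_span ⟨[x], by simp [BTree.leaves], rfl⟩
  | node t u iht ihu =>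
    show b (t.eval b) (u.eval b) ∈ Submodule.span K
      {y : L | ∃ l : List L, l.Perm (t.leaves ++ u.leaves) ∧ y = sProd b l}
    refine Submodule.span_induction
      (p := fun x _ => ∀ y ∈ Submodule.span K
          {y : L | ∃ l : List L, l.Perm u.leaves ∧ y = sProd b l},
        b x y ∈ Submodule.span K
          {y : L | ∃ l : List L, l.Perm (t.leaves ++ u.leaves) ∧ y = sProd b l})
      ?_ ?_ ?_ ?_ iht (u.eval b) ihu
    · rintro x ⟨l, hl, rfl⟩ y hy
      refine Submodule.span_induction
        (p := fun y _ => b (sProd b l) y ∈ Submodule.span K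
          {y : L | ∃ l : List L, l.Perm (t.leaves ++ u.leaves) ∧ y = sProd b l})
        ?_ ?_ ?_ ?_ hy
      · rintro _ ⟨m, hm, rfl⟩
        have hlne : l ≠ [] := by
          intro h; subst h
          exact leaves_ne_nil t hl.nil_eq.symm
        exact span_perm_mono b (hl.append hm) (key_lemma b hLT m.length m l le_rfl hlne)
      · simpa using Submodule.zero_mem _
      · intro y z _ _ hy hz; simpa [map_add] using Submodule.add_mem _ hy hz
      · intro a y _ hy; simpa [map_smul] using Submodule.smul_mem _ a hy
    · intro y _; simpa using Submodule.zero_mem _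
    · intro x y _ _ hx hy z hz; simpa [map_add] using Submodule.add_mem _ (hx z hz) (hy z hz)
    · intro a x _ hx z hz; simpa [map_smul] using Submodule.smul_mem _ a (hx z hz)
end

section
/- Let L be a Lie type algebra and M, N two-sided ideals of L. Then [M,N] + [N,M] is a two-sided ideal of L. -/
/-- Let `L` be a Lie type algebra and `M`, `N` two-sided ideals of `L`.
Then `[M,N] + [N,M]` is a two-sided ideal of `L`. -/
theorem stmt6 {K L : Type*} [Field K] [AddCommGroup L] [Module K L]
    (b : L →ₗ[K] L →ₗ[K] L)
    (hLT : ∀ x y z : L, ∃ α β : K, α ≠ 0 ∧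
      b (b x y) z = α • b x (b y z) + β • b (b x z) y)
    (M N : Submodule K L)
    (hM : Submodule.map₂ b M ⊤ ≤ M ∧ Submodule.map₂ b ⊤ M ≤ M)
    (hN : Submodule.map₂ b N ⊤ ≤ N ∧ Submodule.map₂ b ⊤ N ≤ N) :
    Submodule.map₂ b (Submodule.map₂ b M N ⊔ Submodule.map₂ b N M) ⊤ ≤
        Submodule.map₂ b M N ⊔ Submodule.map₂ b N M ∧
      Submodule.map₂ b ⊤ (Submodule.map₂ b M N ⊔ Submodule.map₂ b N M) ≤
        Submodule.map₂ b M N ⊔ Submodule.map₂ b N M := by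
  set T := Submodule.map₂ b M N ⊔ Submodule.map₂ b N M with hT
  have hMz : ∀ (m : L), m ∈ M → ∀ z : L, b m z ∈ M := fun m hm z =>
    hM.1 (Submodule.apply_mem_map₂ b hm trivial)
  have hzM : ∀ (m : L), m ∈ M → ∀ z : L, b z m ∈ M := fun m hm z =>
    hM.2 (Submodule.apply_mem_map₂ b trivial hm)
  have hNz : ∀ (n : L), n ∈ N → ∀ z : L, b n z ∈ N := fun n hn z =>
    hN.1 (Submodule.apply_mem_map₂ b hn trivial)
  have hzN : ∀ (n : L), n ∈ N → ∀ z : L, b z n ∈ N := fun n hn z =>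
    hN.2 (Submodule.apply_mem_map₂ b trivial hn)
  -- key: products of generators with arbitrary z land in T
  have key1 : ∀ m ∈ M, ∀ n ∈ N, ∀ z : L, b (b m n) z ∈ T := by
    intro m hm n hn z
    obtain ⟨α, β, hα, heq⟩ := hLT m n z
    rw [heq]
    exact add_mem
      (Submodule.smul_mem _ _ ((le_sup_left : Submodule.map₂ b M N ≤ T)
        (Submodule.apply_mem_map₂ b hm (hNz n hn z))))
      (Submodule.smul_mem _ _ ((le_sup_left : Submodule.map₂ b M N ≤ T)
        (Submodule.apply_mem_map₂ b (hMz m hm z) hn)))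
  have key1' : ∀ n ∈ N, ∀ m ∈ M, ∀ z : L, b (b n m) z ∈ T := by
    intro n hn m hm z
    obtain ⟨α, β, hα, heq⟩ := hLT n m z
    rw [heq]
    exact add_mem
      (Submodule.smul_mem _ _ ((le_sup_right : Submodule.map₂ b N M ≤ T)
        (Submodule.apply_mem_map₂ b hn (hMz m hm z))))
      (Submodule.smul_mem _ _ ((le_sup_right : Submodule.map₂ b N M ≤ T)
        (Submodule.apply_mem_map₂ b (hNz n hn z) hm)))
  have key2 : ∀ (z : L), ∀ m ∈ M, ∀ n ∈ N, b z (b m n) ∈ T := by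
    intro z m hm n hn
    obtain ⟨α, β, hα, heq⟩ := hLT z m n
    rw [← Submodule.smul_mem_iff T hα]
    have : α • b z (b m n) = b (b z m) n - β • b (b z n) m :=
      eq_sub_of_add_eq heq.symm
    rw [this]
    exact sub_mem
      ((le_sup_left : Submodule.map₂ b M N ≤ T)
        (Submodule.apply_mem_map₂ b (hzM m hm z) hn))
      (Submodule.smul_mem _ _ ((le_sup_right : Submodule.map₂ b N M ≤ T)
        (Submodule.apply_mem_map₂ b (hzN n hn z) hm)))
  have key2' : ∀ (z : L), ∀ n ∈ N, ∀ m ∈ M, b z (b n m) ∈ T := by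
    intro z n hn m hm
    obtain ⟨α, β, hα, heq⟩ := hLT z n m
    rw [← Submodule.smul_mem_iff T hα]
    have : α • b z (b n m) = b (b z n) m - β • b (b z m) n :=
      eq_sub_of_add_eq heq.symm
    rw [this]
    exact sub_mem
      ((le_sup_right : Submodule.map₂ b N M ≤ T)
        (Submodule.apply_mem_map₂ b (hzN n hn z) hm))
      (Submodule.smul_mem _ _ ((le_sup_left : Submodule.map₂ b M N ≤ T)
        (Submodule.apply_mem_map₂ b (hzM m hm z) hn)))
  constructor
  · rw [Submodule.map₂_le]
    intro w hw z _
    have hw' : w ∈ T := hw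
    -- b w z ∈ T, linear in w
    revert hw'
    show w ∈ T → b w z ∈ T
    intro hw'
    have : T ≤ Submodule.comap (b.flip z) T := by
      rw [hT]
      apply sup_le
      · rw [Submodule.map₂_le]
        intro m hm n hn
        exact key1 m hm n hn z
      · rw [Submodule.map₂_le]
        intro n hn m hm
        exact key1' n hn m hm z
    exact this hw'
  · rw [Submodule.map₂_le]
    intro z _ w hw
    have : T ≤ Submodule.comap (b z) T := by
      rw [hT]
      apply sup_le
      · rw [Submodule.map₂_le]
        intro m hm n hn
        exact key2 z m hm n hn
      · rw [Submodule.map₂_le]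
        intro n hn m hm
        exact key2' z n hn m hm
    exact this hw
end

section
/- Let L be a Lie type algebra and H a subalgebra of L. Then [H,H] is a two-sided ideal of H. -/
/-- Let `L` be a Lie type algebra and `H` a subalgebra of `L`.
Then `[H,H]` is a two-sided ideal of `H`. -/
theorem stmt7 {K L : Type*} [Field K] [AddCommGroup L] [Module K L]
    (b : L →ₗ[K] L →ₗ[K] L)
    (hLT : ∀ x y z : L, ∃ α β : K, α ≠ 0 ∧
      b (b x y) z = α • b x (b y z) + β • b (b x z) y)
    (H : Submodule K L) (hH : Submodule.map₂ b H H ≤ H) :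
    Submodule.map₂ b (Submodule.map₂ b H H) H ≤ Submodule.map₂ b H H ∧
      Submodule.map₂ b H (Submodule.map₂ b H H) ≤ Submodule.map₂ b H H := by
  set S := Submodule.map₂ b H H with hS
  have key1 : ∀ x ∈ H, ∀ y ∈ H, ∀ z ∈ H, b (b x y) z ∈ S := by
    intro x hx y hy z hz
    obtain ⟨α, β, hα, heq⟩ := hLT x y z
    rw [heq]
    exact S.add_mem
      (S.smul_mem α (Submodule.apply_mem_map₂ b hx (hH (Submodule.apply_mem_map₂ b hy hz))))
      (S.smul_mem β (Submodule.apply_mem_map₂ b (hH (Submodule.apply_mem_map₂ b hx hz)) hy))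
  have key2 : ∀ x ∈ H, ∀ y ∈ H, ∀ z ∈ H, b x (b y z) ∈ S := by
    intro x hx y hy z hz
    obtain ⟨α, β, hα, heq⟩ := hLT x y z
    have : b x (b y z) = α⁻¹ • (b (b x y) z - β • b (b x z) y) := by
      rw [heq, smul_sub, smul_add, smul_smul, smul_smul, inv_mul_cancel₀ hα, one_smul]; abel
    rw [this]
    exact S.smul_mem _ (S.sub_mem (key1 x hx y hy z hz)
      (S.smul_mem β (Submodule.apply_mem_map₂ b (hH (Submodule.apply_mem_map₂ b hx hz)) hy)))
  constructor
  · refine Submodule.map₂_le.2 fun m hm n hn => ?_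
    have : S ≤ Submodule.comap (b.flip n) S :=
      Submodule.map₂_le.2 fun x hx y hy => key1 x hx y hy n hn
    exact this hm
  · refine Submodule.map₂_le.2 fun m hm n hn => ?_
    have : S ≤ Submodule.comap (b m) S :=
      Submodule.map₂_le.2 fun y hy z hz => key2 m hm y hy z hz
    exact this hn
end

section
/- Let L be a (ℤ/nℤ)-graded algebra and T a homogeneous (two-sided) ideal of L having exactly e nonzero homogeneous components. Then the number of indices i such that the component L_i does not centralize T (i.e., [L_i, T] ≠ 0 or [T, L_i] ≠ 0) is at most e². -/
/-- Let `L = ⊕ L_i` be a `(ℤ/nℤ)`-graded algebra and `T` a homogeneous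
two-sided ideal of `L` having exactly `e` nonzero homogeneous components. Then the
number of indices `i` such that `L_i` does not centralize `T` is at most `e²`. -/
theorem stmt12 {K L : Type*} [Field K] [AddCommGroup L] [Module K L]
    (b : L →ₗ[K] L →ₗ[K] L)
    (n : ℕ) (hn : 0 < n)
    (Lc : ZMod n → Submodule K L)
    (hinternal : DirectSum.IsInternal Lc)
    (hmul : ∀ i j : ZMod n, Submodule.map₂ b (Lc i) (Lc j) ≤ Lc (i + j))
    (T : Submodule K L)
    (hT : Submodule.map₂ b T ⊤ ≤ T ∧ Submodule.map₂ b ⊤ T ≤ T)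
    (hhom : T = ⨆ i : ZMod n, T ⊓ Lc i)
    (e : ℕ) (he : {i : ZMod n | T ⊓ Lc i ≠ ⊥}.ncard = e) :
    {i : ZMod n | Submodule.map₂ b (Lc i) T ≠ ⊥ ∨ Submodule.map₂ b T (Lc i) ≠ ⊥}.ncard
      ≤ e ^ 2 := by
  classical
  haveI : NeZero n := ⟨hn.ne'⟩
  set S : Set (ZMod n) := {i | T ⊓ Lc i ≠ ⊥} with hS
  have hsub : {i : ZMod n | Submodule.map₂ b (Lc i) T ≠ ⊥ ∨ Submodule.map₂ b T (Lc i) ≠ ⊥}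
      ⊆ (fun p : ZMod n × ZMod n => p.1 - p.2) '' (S ×ˢ S) := by
    intro i hi
    rcases hi with h | h
    · rw [hhom, Submodule.map₂_iSup_right] at h
      obtain ⟨j, hj⟩ : ∃ j, Submodule.map₂ b (Lc i) (T ⊓ Lc j) ≠ ⊥ := by
        by_contra hcon
        push_neg at hcon
        exact h (by simp [iSup_eq_bot, hcon])
      have h1 : Submodule.map₂ b (Lc i) (T ⊓ Lc j) ≤ T ⊓ Lc (i + j) :=
        le_inf ((Submodule.map₂_le_map₂ le_top inf_le_left).trans hT.2)
          ((Submodule.map₂_le_map₂ le_rfl inf_le_right).trans (hmul i j))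
      have hij : (i + j) ∈ S := fun hb => hj (le_bot_iff.mp (h1.trans_eq hb))
      have hjS : j ∈ S := by
        intro hb
        exact hj (by rw [hb, Submodule.map₂_bot_right])
      exact ⟨(i + j, j), ⟨hij, hjS⟩, by simp⟩
    · rw [hhom, Submodule.map₂_iSup_left] at h
      obtain ⟨j, hj⟩ : ∃ j, Submodule.map₂ b (T ⊓ Lc j) (Lc i) ≠ ⊥ := by
        by_contra hcon
        push_neg at hcon
        exact h (by simp [iSup_eq_bot, hcon])
      have h1 : Submodule.map₂ b (T ⊓ Lc j) (Lc i) ≤ T ⊓ Lc (j + i) :=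
        le_inf ((Submodule.map₂_le_map₂ inf_le_left le_top).trans hT.1)
          ((Submodule.map₂_le_map₂ inf_le_right le_rfl).trans (hmul j i))
      have hij : (j + i) ∈ S := fun hb => hj (le_bot_iff.mp (h1.trans_eq hb))
      have hjS : j ∈ S := by
        intro hb
        exact hj (by rw [hb, Submodule.map₂_bot_left])
      exact ⟨(j + i, j), ⟨hij, hjS⟩, by simp⟩
  calc {i : ZMod n | Submodule.map₂ b (Lc i) T ≠ ⊥ ∨ Submodule.map₂ b T (Lc i) ≠ ⊥}.ncard
      ≤ ((fun p : ZMod n × ZMod n => p.1 - p.2) '' (S ×ˢ S)).ncard :=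
        Set.ncard_le_ncard hsub (Set.toFinite _)
    _ ≤ (S ×ˢ S).ncard := Set.ncard_image_le (Set.toFinite _)
    _ = S.ncard * S.ncard := by
        rw [Set.ncard_eq_toFinset_card' , Set.toFinset_prod, Finset.card_product, ← Set.ncard_eq_toFinset_card' S]
    _ = e ^ 2 := by rw [he]; ring
end
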